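/- arXiv:1704.02604 — 6 statements merged into one kernel-verified Lean document; each statement's English description precedes it below -/
import Mathlib

section
/- Let k ≥ 3 be an integer and let 0 ≤ a < b ≤ 1. If b < (k-1)/k, or if a > 1/k, then the Hausdorff dimension of W_k(a,b) is strictly positive. -/
/-!
For `r = k⁻ᵐ` let `K` be the set of sums `∑ εᵢ r^(i+1)` with `εᵢ ∈ {0, 1}`: the numbers whose
base-`k` digits vanish except for `1`s at positions divisible by `m`. Multiplication by `kᵐ`
shifts the digit sequence, so every `T_k`-orbit starting in `K` stays in `[0, c]` with
`c = k⁻¹ / (1 - k⁻ᵐ)`, and the orbit of `1 - x` for `x ∈ K \ {0}` stays in `{0} ∪ [1 - c, 1)`.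
As `c → 1/k` when `m → ∞`, one of these two sets avoids the hole for `m` large. Finally `K` has
positive dimension: reading the digits of its points in base `2` is a Hölder map of exponent
`log 2 / log (1 / r)` from `K` onto `[0, 1]`.
-/

open scoped ENNReal

/-- The `k`-transformation `x ↦ k·x mod 1`. -/
noncomputable def Tmap (k : ℕ) (x : ℝ) : ℝ := Int.fract ((k : ℝ) * x)

/-- The survivor set of the `k`-transformation with hole `(a,b)`. -/
def W (k : ℕ) (a b : ℝ) : Set ℝ :=
  {x | x ∈ Set.Ico (0 : ℝ) 1 ∧ ∀ n : ℕ, (Tmap k)^[n] x ∉ Set.Ioo a b}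

/-- The generalized Cantor set `C_k`. -/
def Ck (k : ℕ) : Set ℝ :=
  {x | ∃ a : ℕ → ℕ, (∀ n, a n = 0 ∨ a n = k - 1) ∧
    x = ∑' n : ℕ, (a n : ℝ) / (k : ℝ) ^ (n + 1)}

/-- The `n`-th `k`-ary digit of `x`. -/
noncomputable def digit (k : ℕ) (n : ℕ) (x : ℝ) : ℤ :=
  ⌊(k : ℝ) ^ (n + 1) * x⌋ % (k : ℤ)

open Classical in
/-- The generalized Cantor function `g_k`. -/
noncomputable def gk (k : ℕ) (x : ℝ) : ℝ :=
  if x = 1 then 1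
  else if ∀ n, digit k n x = 0 ∨ digit k n x = (k : ℤ) - 1 then
    ∑' n : ℕ, (digit k n x : ℝ) / (((k : ℝ) - 1) * 2 ^ (n + 1))
  else
    (∑ n ∈ Finset.range (sInf {n : ℕ | ¬(digit k n x = 0 ∨ digit k n x = (k : ℤ) - 1)}),
      (digit k n x : ℝ) / (((k : ℝ) - 1) * 2 ^ (n + 1))) +
    1 / 2 ^ (sInf {n : ℕ | ¬(digit k n x = 0 ∨ digit k n x = (k : ℤ) - 1)} + 1)

/-- The Thue–Morse sequence: parity of the number of 1s in the binary expansion. -/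
def tm (n : ℕ) : ℕ := (Nat.digits 2 n).sum % 2

open Set Filter Topology

noncomputable def ofBinaryDigits (r : ℝ) (ε : ℕ → Fin 2) : ℝ :=
  ∑' i, ((ε i : ℕ) : ℝ) * r ^ (i + 1)

section BinaryDigits

variable {r : ℝ} {ε ε' : ℕ → Fin 2}

lemma fin_two_cast_val_le_one (d : Fin 2) : ((d : ℕ) : ℝ) ≤ 1 := by
  exact_mod_cast Nat.le_of_lt_succ d.isLt

lemma abs_fin_two_cast_val_sub_eq_one {d d' : Fin 2} (h : d ≠ d') :
    |((d : ℕ) : ℝ) - (d' : ℕ)| = 1 := by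
  fin_cases d <;> fin_cases d' <;> simp_all

lemma ofBinaryDigits_term_le (h0 : 0 ≤ r) (ε : ℕ → Fin 2) (i : ℕ) :
    ((ε i : ℕ) : ℝ) * r ^ (i + 1) ≤ r * r ^ i :=
  pow_succ' r i ▸ mul_le_of_le_one_left (by positivity) (fin_two_cast_val_le_one _)

lemma summable_ofBinaryDigits (h0 : 0 ≤ r) (h1 : r < 1) (ε : ℕ → Fin 2) :
    Summable fun i => ((ε i : ℕ) : ℝ) * r ^ (i + 1) :=
  ((summable_geometric_of_lt_one h0 h1).mul_left r).of_nonneg_of_le (fun _ => by positivity)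
    (ofBinaryDigits_term_le h0 ε)

lemma ofBinaryDigits_nonneg (h0 : 0 ≤ r) (ε : ℕ → Fin 2) : 0 ≤ ofBinaryDigits r ε :=
  tsum_nonneg fun _ => by positivity

lemma ofBinaryDigits_le (h0 : 0 ≤ r) (h1 : r < 1) (ε : ℕ → Fin 2) :
    ofBinaryDigits r ε ≤ r / (1 - r) := by
  calc ofBinaryDigits r ε ≤ ∑' i, r * r ^ i :=
        (summable_ofBinaryDigits h0 h1 ε).tsum_le_tsum (ofBinaryDigits_term_le h0 ε)
          ((summable_geometric_of_lt_one h0 h1).mul_left r)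
    _ = r / (1 - r) := by rw [tsum_mul_left, tsum_geometric_of_lt_one h0 h1, div_eq_mul_inv]

lemma ofBinaryDigits_eq_mul_add (h0 : 0 ≤ r) (h1 : r < 1) (ε : ℕ → Fin 2) :
    ofBinaryDigits r ε = r * ((ε 0 : ℕ) + ofBinaryDigits r fun i => ε (i + 1)) := by
  rw [ofBinaryDigits, (summable_ofBinaryDigits h0 h1 ε).tsum_eq_zero_add, ofBinaryDigits,
    mul_add, ← tsum_mul_left]
  congr 1
  · ring
  · exact tsum_congr fun i => by ring

lemma ofBinaryDigits_le_half (h0 : 0 ≤ r) (h3 : r ≤ 1 / 3) (ε : ℕ → Fin 2) :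
    ofBinaryDigits r ε ≤ 1 / 2 := by
  refine (ofBinaryDigits_le h0 (by linarith) ε).trans ?_
  rw [div_le_iff₀ (by linarith)]
  linarith

lemma abs_sub_ofBinaryDigits_le_half (h0 : 0 ≤ r) (h3 : r ≤ 1 / 3) (ε ε' : ℕ → Fin 2) :
    |ofBinaryDigits r ε - ofBinaryDigits r ε'| ≤ 1 / 2 :=
  sub_zero (1 / 2 : ℝ) ▸ abs_sub_le_of_le_of_le (ofBinaryDigits_nonneg h0 ε)
    (ofBinaryDigits_le_half h0 h3 ε) (ofBinaryDigits_nonneg h0 ε')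
    (ofBinaryDigits_le_half h0 h3 ε')

/-- Below ratio `1/3` the first differing digit dominates all later ones. -/
lemma pow_succ_div_two_le_abs_sub_ofBinaryDigits (h0 : 0 < r) (h3 : r ≤ 1 / 3) {c : ℕ}
    (heq : ∀ i < c, ε i = ε' i) (hne : ε c ≠ ε' c) :
    r ^ (c + 1) / 2 ≤ |ofBinaryDigits r ε - ofBinaryDigits r ε'| := by
  have h1 : r < 1 := by linarith
  induction c generalizing ε ε' with
  | zero =>
    have htail := abs_sub_ofBinaryDigits_le_half h0.le h3 (fun i => ε (i + 1)) fun i => ε' (i + 1)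
    rw [ofBinaryDigits_eq_mul_add h0.le h1 ε, ofBinaryDigits_eq_mul_add h0.le h1 ε', ← mul_sub,
      abs_mul, abs_of_pos h0, add_sub_add_comm]
    have hsep := abs_sub_abs_le_abs_add (((ε 0 : ℕ) : ℝ) - (ε' 0 : ℕ))
      (ofBinaryDigits r (fun i => ε (i + 1)) - ofBinaryDigits r fun i => ε' (i + 1))
    rw [abs_fin_two_cast_val_sub_eq_one hne] at hsep
    nlinarith
  | succ c ih =>
    rw [ofBinaryDigits_eq_mul_add h0.le h1 ε, ofBinaryDigits_eq_mul_add h0.le h1 ε',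
      heq 0 c.succ_pos, ← mul_sub, add_sub_add_left_eq_sub, abs_mul, abs_of_pos h0, pow_succ',
      mul_div_assoc]
    exact mul_le_mul_of_nonneg_left (ih (fun i hi => heq (i + 1) (by omega)) hne) h0.le


lemma pow_firstDiff_add_two_le_abs_sub_ofBinaryDigits (h0 : 0 < r) (h3 : r ≤ 1 / 3)
    (hne : ε ≠ ε') :
    r ^ (PiNat.firstDiff ε ε' + 2) ≤ |ofBinaryDigits r ε - ofBinaryDigits r ε'| := by
  refine le_trans ?_ (pow_succ_div_two_le_abs_sub_ofBinaryDigits (c := PiNat.firstDiff ε ε') h0 h3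
    (fun i hi => PiNat.apply_eq_of_lt_firstDiff hi) (PiNat.apply_firstDiff_ne hne))
  rw [pow_succ]
  nlinarith [pow_pos h0 (PiNat.firstDiff ε ε' + 1)]

lemma ofBinaryDigits_injective (h0 : 0 < r) (h3 : r ≤ 1 / 3) :
    Function.Injective (ofBinaryDigits r) := by
  intro ε ε' h
  by_contra hne
  have := pow_firstDiff_add_two_le_abs_sub_ofBinaryDigits h0 h3 hne
  rw [h, sub_self, abs_zero] at this
  exact (pow_pos h0 _).not_ge this

lemma HolderOnWith.of_dist_le {X Y : Type*} [PseudoMetricSpace X] [PseudoMetricSpace Y]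
    {C α : NNReal} {f : X → Y} {s : Set X}
    (h : ∀ x ∈ s, ∀ y ∈ s, dist (f x) (f y) ≤ C * dist x y ^ (α : ℝ)) :
    HolderOnWith C α f s := by
  intro x hx y hy
  rw [edist_dist, edist_dist, ← ENNReal.ofReal_coe_nnreal,
    ENNReal.ofReal_rpow_of_nonneg dist_nonneg α.coe_nonneg, ← ENNReal.ofReal_mul C.coe_nonneg]
  exact ENNReal.ofReal_le_ofReal (h x hx y hy)

lemma holderOnWith_ofDigits_comp_invFun (h0 : 0 < r) (h3 : r ≤ 1 / 3) :
    HolderOnWith 4 (Real.logb r 2⁻¹).toNNReal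
      (Real.ofDigits ∘ Function.invFun (ofBinaryDigits r)) (range (ofBinaryDigits r)) := by
  have hα : 0 ≤ Real.logb r 2⁻¹ := (Real.logb_pos_of_base_lt_one h0 (by linarith)
    (by norm_num) (by norm_num)).le
  refine HolderOnWith.of_dist_le ?_
  rintro - ⟨ε, rfl⟩ - ⟨ε', rfl⟩
  simp only [Function.comp_apply, Function.leftInverse_invFun (ofBinaryDigits_injective h0 h3) _,
    Real.dist_eq, Real.coe_toNNReal _ hα]
  rcases eq_or_ne ε ε' with rfl | hne
  · simp only [sub_self, abs_zero]
    positivity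
  have hsep := pow_firstDiff_add_two_le_abs_sub_ofBinaryDigits h0 h3 hne
  calc |Real.ofDigits ε - Real.ofDigits ε'| ≤ ((2 : ℝ) ^ PiNat.firstDiff ε ε')⁻¹ :=
        Real.abs_ofDigits_sub_ofDigits_le fun i hi => PiNat.apply_eq_of_lt_firstDiff hi
    _ = 4 * (r ^ Real.logb r 2⁻¹) ^ (PiNat.firstDiff ε ε' + 2) := by
        rw [Real.rpow_logb h0 (by linarith) (by norm_num), ← inv_pow]
        ring
    _ ≤ 4 * |ofBinaryDigits r ε - ofBinaryDigits r ε'| ^ Real.logb r 2⁻¹ := by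
        rw [Real.rpow_pow_comm h0.le]
        gcongr

lemma dimH_range_ofBinaryDigits_pos (h0 : 0 < r) (h3 : r ≤ 1 / 3) :
    0 < dimH (range (ofBinaryDigits r)) := by
  have hα : 0 < (Real.logb r 2⁻¹).toNNReal := Real.toNNReal_pos.2 <|
    Real.logb_pos_of_base_lt_one h0 (by linarith) (by norm_num) (by norm_num)
  have hIcc : Icc 0 1 ⊆ (Real.ofDigits ∘ Function.invFun (ofBinaryDigits r)) ''
      range (ofBinaryDigits r) := by
    intro y hy
    obtain ⟨δ, -, rfl⟩ := Real.ofDigits_SurjOn one_lt_two hy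
    exact ⟨ofBinaryDigits r δ, mem_range_self δ, by
      simp [Function.leftInverse_invFun (ofBinaryDigits_injective h0 h3) δ]⟩
  have hone : (1 : ℝ≥0∞) ≤ dimH (range (ofBinaryDigits r)) / (Real.logb r 2⁻¹).toNNReal :=
    calc (1 : ℝ≥0∞) = dimH (Icc (0 : ℝ) 1) := by
          rw [Real.dimH_of_nonempty_interior (by simp [interior_Icc]), Module.finrank_self,
            Nat.cast_one]
      _ ≤ _ := (dimH_mono hIcc).trans ((holderOnWith_ofDigits_comp_invFun h0 h3).dimH_image_le hα)
  refine pos_iff_ne_zero.2 fun h => ?_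
  simp [h] at hone

end BinaryDigits

lemma Tmap_iterate_eq_fract (k n : ℕ) {x : ℝ} (hx : x ∈ Ico 0 1) :
    (Tmap k)^[n] x = Int.fract ((k : ℝ) ^ n * x) := by
  induction n with
  | zero => simpa using (Int.fract_eq_self.2 hx).symm
  | succ n ih =>
    have : (k : ℝ) * Int.fract ((k : ℝ) ^ n * x) =
        (k : ℝ) ^ (n + 1) * x - ((k * ⌊(k : ℝ) ^ n * x⌋ : ℤ) : ℝ) := by
      rw [Int.fract]; push_cast; ring
    rw [Function.iterate_succ_apply', ih, Tmap, this, Int.fract_sub_intCast]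

lemma Tmap_iterate_one_sub (k n : ℕ) {y : ℝ} (hy : y ∈ Ioo 0 1) :
    (Tmap k)^[n] (1 - y) = Int.fract (-(Tmap k)^[n] y) := by
  have : (k : ℝ) ^ n * (1 - y) =
      -Int.fract ((k : ℝ) ^ n * y) + ((k ^ n - ⌊(k : ℝ) ^ n * y⌋ : ℤ) : ℝ) := by
    rw [Int.fract]; push_cast; ring
  rw [Tmap_iterate_eq_fract k n ⟨by linarith [hy.2], by linarith [hy.1]⟩,
    Tmap_iterate_eq_fract k n (Ioo_subset_Ico_self hy), this, Int.fract_add_intCast]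

section Orbit

variable {k m : ℕ}

lemma inv_pow_le_one_third (hk : 3 ≤ k) (hm : 0 < m) : ((k : ℝ) ^ m)⁻¹ ≤ 1 / 3 := by
  rw [one_div]
  gcongr
  calc (3 : ℝ) ≤ k := by exact_mod_cast hk
    _ ≤ (k : ℝ) ^ m := le_self_pow₀ (by norm_cast; omega) hm.ne'

lemma inv_div_one_sub_inv_pow_le_half (hk : 3 ≤ k) (hm : 0 < m) :
    (k : ℝ)⁻¹ / (1 - ((k : ℝ) ^ m)⁻¹) ≤ 1 / 2 := by
  have hr := inv_pow_le_one_third hk hm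
  have hk' : (k : ℝ)⁻¹ ≤ 1 / 3 := by
    rw [one_div]; gcongr; exact_mod_cast hk
  rw [div_le_iff₀ (by linarith)]
  linarith

lemma pow_mul_ofBinaryDigits_le (hk : 3 ≤ k) (hm : 0 < m) {i : ℕ} (hi : i < m)
    (ε : ℕ → Fin 2) :
    (k : ℝ) ^ i * ofBinaryDigits ((k : ℝ) ^ m)⁻¹ ε ≤ (k : ℝ)⁻¹ / (1 - ((k : ℝ) ^ m)⁻¹) := by
  have hr := inv_pow_le_one_third hk hm
  have hk1 : (1 : ℝ) ≤ k := by norm_cast; omega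
  have hkr : (k : ℝ) ^ i * ((k : ℝ) ^ m)⁻¹ ≤ (k : ℝ)⁻¹ := by
    calc (k : ℝ) ^ i * ((k : ℝ) ^ m)⁻¹ ≤ (k : ℝ) ^ i * ((k : ℝ) ^ (i + 1))⁻¹ := by
          gcongr
          exact hi
      _ = (k : ℝ)⁻¹ := by
          rw [pow_succ, mul_inv, ← mul_assoc, mul_inv_cancel₀ (by positivity), one_mul]
  calc (k : ℝ) ^ i * ofBinaryDigits ((k : ℝ) ^ m)⁻¹ ε
      ≤ (k : ℝ) ^ i * (((k : ℝ) ^ m)⁻¹ / (1 - ((k : ℝ) ^ m)⁻¹)) := by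
        gcongr
        exact ofBinaryDigits_le (by positivity) (by linarith) ε
    _ ≤ (k : ℝ)⁻¹ / (1 - ((k : ℝ) ^ m)⁻¹) := by
        rw [← mul_div_assoc]
        gcongr
        linarith

lemma Tmap_iterate_ofBinaryDigits_of_lt (hk : 3 ≤ k) (hm : 0 < m) {i : ℕ} (hi : i < m)
    (ε : ℕ → Fin 2) :
    (Tmap k)^[i] (ofBinaryDigits ((k : ℝ) ^ m)⁻¹ ε) =
      (k : ℝ) ^ i * ofBinaryDigits ((k : ℝ) ^ m)⁻¹ ε := by
  have h0 : (0 : ℝ) ≤ ((k : ℝ) ^ m)⁻¹ := by positivity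
  have hr := inv_pow_le_one_third hk hm
  have hbound := (pow_mul_ofBinaryDigits_le hk hm hi ε).trans
    (inv_div_one_sub_inv_pow_le_half hk hm)
  rw [Tmap_iterate_eq_fract k i ⟨ofBinaryDigits_nonneg h0 ε, by
    linarith [ofBinaryDigits_le_half h0 hr ε]⟩, Int.fract_eq_self]
  exact ⟨mul_nonneg (by positivity) (ofBinaryDigits_nonneg h0 ε), by linarith⟩

lemma Tmap_iterate_ofBinaryDigits_eq_tail (hk : 3 ≤ k) (hm : 0 < m) (ε : ℕ → Fin 2) :
    (Tmap k)^[m] (ofBinaryDigits ((k : ℝ) ^ m)⁻¹ ε) =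
      ofBinaryDigits ((k : ℝ) ^ m)⁻¹ fun i => ε (i + 1) := by
  have hr := inv_pow_le_one_third hk hm
  have h0 : (0 : ℝ) ≤ ((k : ℝ) ^ m)⁻¹ := by positivity
  have hx := ofBinaryDigits_eq_mul_add h0 (by linarith) ε
  have hshift := ofBinaryDigits_le_half h0 hr fun i => ε (i + 1)
  rw [Tmap_iterate_eq_fract k m ⟨ofBinaryDigits_nonneg h0 ε, by
      linarith [ofBinaryDigits_le_half h0 hr ε]⟩, hx, ← mul_assoc,
    mul_inv_cancel₀ (by positivity), one_mul, add_comm, Int.fract_add_natCast,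
    Int.fract_eq_self.2 ⟨ofBinaryDigits_nonneg h0 _, by linarith⟩]

lemma Tmap_iterate_mul_ofBinaryDigits (hk : 3 ≤ k) (hm : 0 < m) (q : ℕ) (ε : ℕ → Fin 2) :
    (Tmap k)^[m * q] (ofBinaryDigits ((k : ℝ) ^ m)⁻¹ ε) =
      ofBinaryDigits ((k : ℝ) ^ m)⁻¹ fun i => ε (i + q) := by
  induction q with
  | zero => rfl
  | succ q ih =>
    rw [mul_add_one, add_comm, Function.iterate_add_apply, ih,
      Tmap_iterate_ofBinaryDigits_eq_tail hk hm]
    simp only [add_right_comm, add_assoc]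

lemma Tmap_iterate_ofBinaryDigits_mem_Icc (hk : 3 ≤ k) (hm : 0 < m) (n : ℕ)
    (ε : ℕ → Fin 2) :
    (Tmap k)^[n] (ofBinaryDigits ((k : ℝ) ^ m)⁻¹ ε) ∈
      Icc 0 ((k : ℝ)⁻¹ / (1 - ((k : ℝ) ^ m)⁻¹)) := by
  rw [← Nat.mod_add_div n m, Function.iterate_add_apply, Tmap_iterate_mul_ofBinaryDigits hk hm,
    Tmap_iterate_ofBinaryDigits_of_lt hk hm (Nat.mod_lt n hm)]
  exact ⟨mul_nonneg (by positivity) (ofBinaryDigits_nonneg (by positivity) _),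
    pow_mul_ofBinaryDigits_le hk hm (Nat.mod_lt n hm) _⟩

lemma range_ofBinaryDigits_subset_W (hk : 3 ≤ k) (hm : 0 < m) {a b : ℝ}
    (hc : (k : ℝ)⁻¹ / (1 - ((k : ℝ) ^ m)⁻¹) ≤ a) :
    range (ofBinaryDigits ((k : ℝ) ^ m)⁻¹) ⊆ W k a b := by
  rintro - ⟨ε, rfl⟩
  have hx := Tmap_iterate_ofBinaryDigits_mem_Icc hk hm 0 ε
  refine ⟨⟨hx.1, hx.2.trans_lt ?_⟩, fun n hn => ?_⟩
  · linarith [inv_div_one_sub_inv_pow_le_half hk hm]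
  · linarith [(Tmap_iterate_ofBinaryDigits_mem_Icc hk hm n ε).2, hn.1]

/-- Reflecting `x ↦ 1 - x` turns an orbit in `[0, c]` into one in `{0} ∪ [1 - c, 1)`. -/
lemma one_sub_range_ofBinaryDigits_subset_W (hk : 3 ≤ k) (hm : 0 < m) {a b : ℝ} (ha : 0 ≤ a)
    (hc : (k : ℝ)⁻¹ / (1 - ((k : ℝ) ^ m)⁻¹) ≤ 1 - b) :
    (fun y => 1 - y) '' (range (ofBinaryDigits ((k : ℝ) ^ m)⁻¹) \ {0}) ⊆ W k a b := by
  rintro - ⟨-, ⟨⟨ε, rfl⟩, hne⟩, rfl⟩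
  have hx := Tmap_iterate_ofBinaryDigits_mem_Icc hk hm 0 ε
  rw [Function.iterate_zero_apply] at hx
  have hhalf := inv_div_one_sub_inv_pow_le_half hk hm
  have hpos : 0 < ofBinaryDigits ((k : ℝ) ^ m)⁻¹ ε := lt_of_le_of_ne hx.1 (Ne.symm hne)
  have hlt : ofBinaryDigits ((k : ℝ) ^ m)⁻¹ ε < 1 := by linarith [hx.2]
  refine ⟨⟨by linarith, by linarith⟩, fun n hn => ?_⟩
  rw [Tmap_iterate_one_sub k n ⟨hpos, hlt⟩] at hn
  obtain ⟨ht0, htc⟩ := Tmap_iterate_ofBinaryDigits_mem_Icc hk hm n ε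
  rcases ht0.eq_or_lt with ht | ht
  · rw [← ht, neg_zero, Int.fract_zero] at hn
    linarith [hn.1]
  · rw [Int.fract_neg (by rw [Int.fract_eq_self.2 ⟨ht0, by linarith⟩]; exact ht.ne'),
      Int.fract_eq_self.2 ⟨ht0, by linarith⟩] at hn
    linarith [hn.2]

end Orbit

lemma exists_inv_div_one_sub_inv_pow_lt {k : ℕ} (hk : 1 < k) {t : ℝ} (ht : (k : ℝ)⁻¹ < t) :
    ∃ m, 0 < m ∧ (k : ℝ)⁻¹ / (1 - ((k : ℝ) ^ m)⁻¹) < t := by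
  have hlim : Tendsto (fun m : ℕ => (k : ℝ)⁻¹ / (1 - ((k : ℝ) ^ m)⁻¹)) atTop
      (𝓝 ((k : ℝ)⁻¹ / (1 - 0))) := by
    refine tendsto_const_nhds.div (tendsto_const_nhds.sub ?_) (by norm_num)
    simp_rw [← inv_pow]
    exact tendsto_pow_atTop_nhds_zero_of_lt_one (by positivity)
      (inv_lt_one_of_one_lt₀ (by exact_mod_cast hk))
  rw [sub_zero, div_one] at hlim
  exact ((eventually_gt_atTop 0).and (hlim.eventually (gt_mem_nhds ht))).exists

lemma dimH_diff_singleton {X : Type*} [EMetricSpace X] (s : Set X) (x : X) :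
    dimH (s \ {x}) = dimH s :=
  le_antisymm (dimH_mono sdiff_subset) <| by
    calc dimH s ≤ dimH (s \ {x} ∪ {x}) := dimH_mono (subset_sdiff_union s {x})
      _ = dimH (s \ {x}) := by rw [dimH_union, dimH_singleton, max_eq_left zero_le]

theorem stmt3_general (k : ℕ) (hk : 3 ≤ k) (a b : ℝ) (ha : 0 ≤ a)
    (h : b < ((k : ℝ) - 1) / k ∨ 1 / (k : ℝ) < a) :
    0 < dimH (W k a b) := by
  have hk1 : 1 < k := by omega
  rcases h with hb | ha'
  · have hkb : (k : ℝ)⁻¹ < 1 - b := by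
      rw [sub_div, div_self (by positivity), one_div] at hb
      linarith
    obtain ⟨m, hm, hc⟩ := exists_inv_div_one_sub_inv_pow_lt hk1 hkb
    calc 0 < dimH (range (ofBinaryDigits ((k : ℝ) ^ m)⁻¹)) :=
          dimH_range_ofBinaryDigits_pos (by positivity) (inv_pow_le_one_third hk hm)
      _ = dimH ((fun y => 1 - y) '' (range (ofBinaryDigits ((k : ℝ) ^ m)⁻¹) \ {0})) := by
          rw [← dimH_diff_singleton _ 0]
          exact ((IsometryEquiv.subLeft (1 : ℝ)).dimH_image _).symm
      _ ≤ dimH (W k a b) := dimH_mono (one_sub_range_ofBinaryDigits_subset_W hk hm ha hc.le)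
  · obtain ⟨m, hm, hc⟩ := exists_inv_div_one_sub_inv_pow_lt hk1 (one_div (k : ℝ) ▸ ha')
    exact (dimH_range_ofBinaryDigits_pos (by positivity) (inv_pow_le_one_third hk hm)).trans_le
      (dimH_mono (range_ofBinaryDigits_subset_W hk hm hc.le))

/-- if `b < (k-1)/k` or `a > 1/k`, then `dimH W_k(a,b) > 0`. -/
theorem stmt3 (k : ℕ) (hk : 3 ≤ k) (a b : ℝ) (ha : 0 ≤ a) (hab : a < b) (hb : b ≤ 1)
    (h : b < ((k : ℝ) - 1) / k ∨ 1 / (k : ℝ) < a) :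
    0 < dimH (W k a b) :=
  stmt3_general k hk a b ha h
end

section
/- Let k ≥ 3 be an integer. The map x ↦ Int.fract(k·x) maps the set C_k \ {1} onto itself: the image of C_k \ {1} under this map equals C_k \ {1}. -/
open scoped ENNReal

/-!
Points of `C_k` are base-`k` expansions with digits `0` and `k - 1`, and `x ↦ fract (k x)` acts
on expansions as the shift, dropping the first digit. The shift maps admissible digit sequences
onto admissible ones (prepend a `0` to find a preimage); the only subtlety is a tail
`0.(k-1)(k-1)… = 1`, which `fract` sends to `0 ∈ C_k`.
-/

namespace Real

theorem ofDigits_eq_div_add_ofDigits_tail {b : ℕ} (d : ℕ → Fin b) :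
    ofDigits d = (d 0 : ℝ) / b + (b : ℝ)⁻¹ * ofDigits (fun i ↦ d (i + 1)) := by
  rw [ofDigits_eq_sum_add_ofDigits d 1]
  simp [ofDigitsTerm, div_eq_mul_inv]

theorem mul_ofDigits {b : ℕ} (d : ℕ → Fin b) :
    b * ofDigits d = (d 0 : ℝ) + ofDigits (fun i ↦ d (i + 1)) := by
  have hb : (b : ℝ) ≠ 0 := by exact_mod_cast (Fin.pos (d 0)).ne'
  rw [ofDigits_eq_div_add_ofDigits_tail, mul_add, mul_div_cancel₀ _ hb, ← mul_assoc,
    mul_inv_cancel₀ hb, one_mul]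

theorem fract_mul_ofDigits {b : ℕ} (d : ℕ → Fin b) :
    Int.fract (b * ofDigits d) = Int.fract (ofDigits (fun i ↦ d (i + 1))) := by
  rw [mul_ofDigits, add_comm, ← Int.cast_natCast, Int.fract_add_intCast]

theorem fract_ofDigits_of_ne_one {b : ℕ} (d : ℕ → Fin b) (h : ofDigits d ≠ 1) :
    Int.fract (ofDigits d) = ofDigits d :=
  Int.fract_eq_self.2 ⟨ofDigits_nonneg d, (ofDigits_le_one d).lt_of_ne h⟩

theorem ofDigits_zero {b : ℕ} [NeZero b] : ofDigits (fun _ ↦ (0 : Fin b)) = 0 := by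
  simp [ofDigits, ofDigitsTerm]

end Real

open Real

theorem tsum_div_pow_eq_ofDigits {k : ℕ} (d : ℕ → Fin k) :
    ∑' n : ℕ, ((d n : ℕ) : ℝ) / (k : ℝ) ^ (n + 1) = ofDigits d := by
  simp [ofDigits, ofDigitsTerm, div_eq_mul_inv]

theorem mem_Ck_iff {k : ℕ} (hk : 0 < k) {x : ℝ} :
    x ∈ Ck k ↔ ∃ d : ℕ → Fin k, (∀ n, (d n : ℕ) = 0 ∨ (d n : ℕ) = k - 1) ∧ x = ofDigits d := by
  constructor
  · rintro ⟨a, ha, rfl⟩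
    have hlt (n : ℕ) : a n < k := by have := ha n; omega
    exact ⟨fun n ↦ ⟨a n, hlt n⟩, ha, tsum_div_pow_eq_ofDigits fun n ↦ ⟨a n, hlt n⟩⟩
  · rintro ⟨d, hd, rfl⟩
    exact ⟨fun n ↦ d n, hd, (tsum_div_pow_eq_ofDigits d).symm⟩

/-- the map `x ↦ Int.fract (k·x)` maps `C_k \ {1}` onto itself. -/
theorem stmt5 (k : ℕ) (hk : 3 ≤ k) :
    (fun x : ℝ => Int.fract ((k : ℝ) * x)) '' (Ck k \ {1}) = Ck k \ {1} := by
  have : NeZero k := ⟨by omega⟩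
  ext y
  simp only [Set.mem_image, Set.mem_sdiff, Set.mem_singleton_iff, mem_Ck_iff (by omega : 0 < k)]
  constructor
  · rintro ⟨x, ⟨⟨d, hd, rfl⟩, -⟩, rfl⟩
    rw [fract_mul_ofDigits]
    by_cases htail : ofDigits (fun i ↦ d (i + 1)) = 1
    · rw [htail, Int.fract_one]
      exact ⟨⟨fun _ ↦ 0, fun _ ↦ Or.inl rfl, ofDigits_zero.symm⟩, zero_ne_one⟩
    · rw [fract_ofDigits_of_ne_one _ htail]
      exact ⟨⟨_, fun n ↦ hd (n + 1), rfl⟩, htail⟩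
  · rintro ⟨⟨d, hd, rfl⟩, hy⟩
    let e : ℕ → Fin k := fun n ↦ Nat.casesOn n 0 d
    have hke : (k : ℝ) * ofDigits e = ofDigits d := by simp [e, mul_ofDigits]
    refine ⟨ofDigits e, ⟨⟨e, fun n ↦ n.casesOn (Or.inl rfl) hd, rfl⟩, fun he ↦ ?_⟩, ?_⟩
    · have hle := ofDigits_le_one d
      rw [← hke, he, mul_one] at hle
      have : (3 : ℝ) ≤ k := by exact_mod_cast hk
      linarith
    · rw [hke, fract_ofDigits_of_ne_one _ hy]
end

section
/- Let k ≥ 3 be an integer. The generalized Cantor function g_k is monotone increasing on [0,1]: for all x, y ∈ [0,1] with x ≤ y, g_k(x) ≤ g_k(y). -/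
/-! If `0 ≤ x < y < 1`, the two points first differ at some `k`-ary digit `N`, where
`d_N(x) < d_N(y)`. If one of the common digits before `N` lies outside `{0, k-1}`, then
`g_k(x) = g_k(y)`. Otherwise both values share the prefix sum `P` of the first `N` terms; since
the `n`-th term of the series is at most `2^{-(n+1)}`, the constraint `d_N(x) ≠ k-1` forces
`g_k(x) ≤ P + 2^{-(N+1)}`, and `d_N(y) ≠ 0` forces `g_k(y) ≥ P + 2^{-(N+1)}`. -/

open scoped ENNReal

section Digits

variable {k : ℕ}

lemma digit_nonneg (hk : k ≠ 0) (n : ℕ) (x : ℝ) : 0 ≤ digit k n x :=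
  Int.emod_nonneg _ (by exact_mod_cast hk)

lemma digit_lt (hk : k ≠ 0) (n : ℕ) (x : ℝ) : digit k n x < k :=
  Int.emod_lt_of_pos _ (by exact_mod_cast Nat.pos_of_ne_zero hk)

lemma floor_pow_succ_mul (hk : k ≠ 0) (n : ℕ) (x : ℝ) :
    ⌊(k : ℝ) ^ (n + 1) * x⌋ = k * ⌊(k : ℝ) ^ n * x⌋ + digit k n x := by
  have hdiv : (k : ℝ) ^ (n + 1) * x / k = (k : ℝ) ^ n * x := by
    field_simp [(Nat.cast_ne_zero.mpr hk : (k : ℝ) ≠ 0)]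
    ring
  rw [← hdiv, Int.floor_div_natCast, digit, Int.mul_ediv_add_emod]

lemma floor_pow_mul_le_floor_pow_mul (hk : k ≠ 0) (n : ℕ) {x y : ℝ} (hxy : x ≤ y) :
    ⌊(k : ℝ) ^ n * x⌋ ≤ ⌊(k : ℝ) ^ n * y⌋ :=
  Int.floor_le_floor (mul_le_mul_of_nonneg_left hxy (by positivity))

lemma exists_digit_lt_of_lt (hk : 1 < k) {x y : ℝ} (hfloor : ⌊x⌋ = ⌊y⌋) (hxy : x < y) :
    ∃ N, (∀ m < N, digit k m x = digit k m y) ∧ digit k N x < digit k N y := by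
  have hk0 : k ≠ 0 := by omega
  have hsep : ∃ n, ⌊(k : ℝ) ^ n * x⌋ < ⌊(k : ℝ) ^ n * y⌋ := by
    obtain ⟨n, hn⟩ := pow_unbounded_of_one_lt (y - x)⁻¹ (by exact_mod_cast hk : (1 : ℝ) < k)
    refine ⟨n, Int.lt_iff_add_one_le.mpr (Int.le_floor.mpr ?_)⟩
    have := (inv_lt_iff_one_lt_mul₀ (sub_pos.mpr hxy)).mp hn
    push_cast
    linarith [Int.floor_le ((k : ℝ) ^ n * x), mul_sub ((k : ℝ) ^ n) y x]
  classical
  have hN0 : Nat.find hsep ≠ 0 := fun h => by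
    have h0 := Nat.find_spec hsep
    rw [h] at h0
    simp [hfloor] at h0
  obtain ⟨N, hN⟩ := Nat.exists_eq_succ_of_ne_zero hN0
  have hbelow : ∀ m ≤ N, ⌊(k : ℝ) ^ m * x⌋ = ⌊(k : ℝ) ^ m * y⌋ := fun m hm =>
    (floor_pow_mul_le_floor_pow_mul hk0 m hxy.le).antisymm (not_lt.mp (Nat.find_min hsep (by omega)))
  refine ⟨N, fun m hm => congrArg (· % (k : ℤ)) (hbelow (m + 1) hm), ?_⟩
  have hsepN := hN ▸ Nat.find_spec hsep
  rw [floor_pow_succ_mul hk0, floor_pow_succ_mul hk0, hbelow N le_rfl] at hsepN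
  omega

end Digits

lemma sum_range_le_of_le_one_div_two_pow {f : ℕ → ℝ} (hf : ∀ n, f n ≤ 1 / 2 ^ (n + 1))
    {N M : ℕ} (hNM : N ≤ M) :
    ∑ n ∈ Finset.range M, f n ≤ ∑ n ∈ Finset.range N, f n + 1 / 2 ^ N - 1 / 2 ^ M := by
  induction M, hNM using Nat.le_induction with
  | base => simp
  | succ M _ ih =>
    rw [Finset.sum_range_succ]
    have hhalf : (1 : ℝ) / 2 ^ (M + 1) = 1 / 2 ^ M - 1 / 2 ^ (M + 1) := by
      rw [pow_succ]; ring
    linarith [hf M]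

section CantorFunction

variable {k : ℕ}

def IsCantorDigit (k : ℕ) (d : ℤ) : Prop := d = 0 ∨ d = (k : ℤ) - 1

noncomputable def cantorTerm (k n : ℕ) (x : ℝ) : ℝ :=
  (digit k n x : ℝ) / (((k : ℝ) - 1) * 2 ^ (n + 1))

lemma cantorTerm_nonneg (hk : 1 < k) (n : ℕ) (x : ℝ) : 0 ≤ cantorTerm k n x := by
  have : (1 : ℝ) < k := by exact_mod_cast hk
  have := digit_nonneg (k := k) (by omega) n x
  unfold cantorTerm
  positivity

lemma cantorTerm_le (hk : 1 < k) (n : ℕ) (x : ℝ) : cantorTerm k n x ≤ 1 / 2 ^ (n + 1) := by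
  have hk' : (0 : ℝ) < k - 1 := by
    have : (1 : ℝ) < k := by exact_mod_cast hk
    linarith
  have hd : (digit k n x : ℝ) ≤ k - 1 := by
    have := digit_lt (k := k) (by omega) n x
    have : digit k n x ≤ (k : ℤ) - 1 := by omega
    exact_mod_cast this
  rw [cantorTerm, div_le_div_iff₀ (by positivity) (by positivity)]
  nlinarith [pow_pos (two_pos : (0 : ℝ) < 2) (n + 1)]

lemma cantorTerm_of_digit_eq_zero {n : ℕ} {x : ℝ} (h : digit k n x = 0) :
    cantorTerm k n x = 0 := by
  simp [cantorTerm, h]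

lemma cantorTerm_of_digit_eq_sub_one (hk : 1 < k) {n : ℕ} {x : ℝ}
    (h : digit k n x = (k : ℤ) - 1) : cantorTerm k n x = 1 / 2 ^ (n + 1) := by
  have hk' : (k : ℝ) - 1 ≠ 0 := by
    have : (1 : ℝ) < k := by exact_mod_cast hk
    linarith
  rw [cantorTerm, h]
  push_cast
  field_simp

lemma sum_range_cantorTerm_congr {N : ℕ} {x y : ℝ} (h : ∀ m < N, digit k m x = digit k m y) :
    ∑ n ∈ Finset.range N, cantorTerm k n x = ∑ n ∈ Finset.range N, cantorTerm k n y :=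
  Finset.sum_congr rfl fun n hn => by rw [cantorTerm, cantorTerm, h n (Finset.mem_range.mp hn)]

lemma gk_one (k : ℕ) : gk k 1 = 1 := if_pos rfl

lemma gk_of_forall_isCantorDigit {x : ℝ} (hx : x ≠ 1)
    (h : ∀ n, IsCantorDigit k (digit k n x)) : gk k x = ∑' n, cantorTerm k n x := by
  rw [gk, if_neg hx]
  exact if_pos h

lemma gk_of_not_isCantorDigit {x : ℝ} (hx : x ≠ 1) {N : ℕ}
    (hpre : ∀ n < N, IsCantorDigit k (digit k n x)) (hN : ¬IsCantorDigit k (digit k N x)) :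
    gk k x = ∑ n ∈ Finset.range N, cantorTerm k n x + 1 / 2 ^ (N + 1) := by
  have hfirst : sInf {n | ¬IsCantorDigit k (digit k n x)} = N :=
    le_antisymm (Nat.sInf_le hN) (not_lt.mp fun hlt =>
      Nat.sInf_mem (s := {n | ¬IsCantorDigit k (digit k n x)}) ⟨N, hN⟩ (hpre _ hlt))
  rw [gk, if_neg hx]
  refine (if_neg fun h => hN (h N)).trans ?_
  exact congrArg (fun M => ∑ n ∈ Finset.range M, cantorTerm k n x + 1 / 2 ^ (M + 1)) hfirst

lemma exists_ge_gk_eq_sum_add {x : ℝ} (hx : x ≠ 1) {N : ℕ}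
    (hpre : ∀ n < N, IsCantorDigit k (digit k n x))
    (hex : ∃ n, ¬IsCantorDigit k (digit k n x)) :
    ∃ M, N ≤ M ∧ gk k x = ∑ n ∈ Finset.range M, cantorTerm k n x + 1 / 2 ^ (M + 1) := by
  classical
  exact ⟨Nat.find hex, not_lt.mp fun h => Nat.find_spec hex (hpre _ h),
    gk_of_not_isCantorDigit hx (fun n hn => not_not.mp (Nat.find_min hex hn)) (Nat.find_spec hex)⟩

lemma gk_le_sum_add (hk : 1 < k) {x : ℝ} (hx : x ≠ 1) {N : ℕ}
    (hpre : ∀ n < N, IsCantorDigit k (digit k n x)) :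
    gk k x ≤ ∑ n ∈ Finset.range N, cantorTerm k n x + 1 / 2 ^ N := by
  by_cases hall : ∀ n, IsCantorDigit k (digit k n x)
  · rw [gk_of_forall_isCantorDigit hx hall]
    refine Real.tsum_le_of_sum_range_le (cantorTerm_nonneg hk · x) fun M => ?_
    rcases le_total N M with hNM | hMN
    · have : (0 : ℝ) ≤ 1 / 2 ^ M := by positivity
      linarith [sum_range_le_of_le_one_div_two_pow (cantorTerm_le hk · x) hNM]
    · have : (0 : ℝ) ≤ 1 / 2 ^ N := by positivity
      linarith [Finset.sum_le_sum_of_subset_of_nonneg (Finset.range_subset_range.mpr hMN)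
        fun n _ _ => cantorTerm_nonneg hk n x]
  · obtain ⟨M, hNM, hM⟩ := exists_ge_gk_eq_sum_add hx hpre (not_forall.mp hall)
    have : (1 : ℝ) / 2 ^ (M + 1) ≤ 1 / 2 ^ M := by gcongr <;> norm_num
    linarith [sum_range_le_of_le_one_div_two_pow (cantorTerm_le hk · x) hNM]

lemma sum_le_gk (hk : 1 < k) {x : ℝ} (hx : x ≠ 1) {N : ℕ}
    (hpre : ∀ n < N, IsCantorDigit k (digit k n x)) :
    ∑ n ∈ Finset.range N, cantorTerm k n x ≤ gk k x := by
  by_cases hall : ∀ n, IsCantorDigit k (digit k n x)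
  · have hbdd : ∀ M, ∑ n ∈ Finset.range M, cantorTerm k n x ≤ 1 := fun M => by
      have h := sum_range_le_of_le_one_div_two_pow (cantorTerm_le hk · x) (Nat.zero_le M)
      have : (0 : ℝ) ≤ 1 / 2 ^ M := by positivity
      simp only [Finset.range_zero, Finset.sum_empty, pow_zero] at h
      linarith
    rw [gk_of_forall_isCantorDigit hx hall]
    exact (summable_of_sum_range_le (cantorTerm_nonneg hk · x) hbdd).sum_le_tsum _
      fun n _ => cantorTerm_nonneg hk n x
  · obtain ⟨M, hNM, hM⟩ := exists_ge_gk_eq_sum_add hx hpre (not_forall.mp hall)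
    have : (0 : ℝ) ≤ 1 / 2 ^ (M + 1) := by positivity
    linarith [Finset.sum_le_sum_of_subset_of_nonneg (Finset.range_subset_range.mpr hNM)
      fun n _ _ => cantorTerm_nonneg hk n x]

lemma gk_le_of_digit_ne_sub_one (hk : 1 < k) {x : ℝ} (hx : x ≠ 1) {N : ℕ}
    (hpre : ∀ n < N, IsCantorDigit k (digit k n x)) (hN : digit k N x ≠ (k : ℤ) - 1) :
    gk k x ≤ ∑ n ∈ Finset.range N, cantorTerm k n x + 1 / 2 ^ (N + 1) := by
  by_cases hcantor : IsCantorDigit k (digit k N x)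
  · have hzero : digit k N x = 0 := hcantor.resolve_right hN
    simpa [Finset.sum_range_succ, cantorTerm_of_digit_eq_zero hzero] using
      gk_le_sum_add hk hx (Nat.forall_lt_succ_right.mpr ⟨hpre, hcantor⟩)
  · exact (gk_of_not_isCantorDigit hx hpre hcantor).le

lemma le_gk_of_digit_ne_zero (hk : 1 < k) {x : ℝ} (hx : x ≠ 1) {N : ℕ}
    (hpre : ∀ n < N, IsCantorDigit k (digit k n x)) (hN : digit k N x ≠ 0) :
    ∑ n ∈ Finset.range N, cantorTerm k n x + 1 / 2 ^ (N + 1) ≤ gk k x := by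
  by_cases hcantor : IsCantorDigit k (digit k N x)
  · have htop : digit k N x = (k : ℤ) - 1 := hcantor.resolve_left hN
    simpa [Finset.sum_range_succ, cantorTerm_of_digit_eq_sub_one hk htop] using
      sum_le_gk hk hx (Nat.forall_lt_succ_right.mpr ⟨hpre, hcantor⟩)
  · exact (gk_of_not_isCantorDigit hx hpre hcantor).ge

lemma gk_eq_of_digits_eq {x y : ℝ} (hx : x ≠ 1) (hy : y ≠ 1) {M : ℕ}
    (hxy : ∀ m ≤ M, digit k m x = digit k m y) (hM : ¬IsCantorDigit k (digit k M x)) :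
    gk k x = gk k y := by
  classical
  have hex : ∃ n, ¬IsCantorDigit k (digit k n x) := ⟨M, hM⟩
  have hle : Nat.find hex ≤ M := Nat.find_min' hex hM
  have hpre : ∀ n < Nat.find hex, IsCantorDigit k (digit k n x) := fun n hn =>
    not_not.mp (Nat.find_min hex hn)
  rw [gk_of_not_isCantorDigit hx hpre (Nat.find_spec hex),
    gk_of_not_isCantorDigit hy (N := Nat.find hex) (fun n hn => hxy n (by omega) ▸ hpre n hn)
      (hxy _ hle ▸ Nat.find_spec hex),
    sum_range_cantorTerm_congr (N := Nat.find hex) fun n hn => hxy n (by omega)]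

end CantorFunction

/-- `g_k` is monotone increasing on `[0,1]`. -/
theorem stmt6 (k : ℕ) (hk : 3 ≤ k) :
    MonotoneOn (gk k) (Set.Icc (0 : ℝ) 1) := by
  have hk1 : 1 < k := by omega
  rintro x ⟨hx0, -⟩ y ⟨hy0, hy1⟩ hxy
  rcases hxy.eq_or_lt with rfl | hlt
  · rfl
  have hx1 : x ≠ 1 := (hlt.trans_le hy1).ne
  rcases hy1.eq_or_lt with rfl | hy1
  · simpa [gk_one] using gk_le_sum_add hk1 hx1 (N := 0) (by simp)
  have hfloor : ⌊x⌋ = ⌊y⌋ := by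
    rw [Int.floor_eq_zero_iff.mpr ⟨hx0, by linarith⟩, Int.floor_eq_zero_iff.mpr ⟨hy0, hy1⟩]
  obtain ⟨N, hpre, hN⟩ := exists_digit_lt_of_lt hk1 hfloor hlt
  by_cases hcantor : ∀ m < N, IsCantorDigit k (digit k m x)
  · have hdy := digit_lt (k := k) (by omega) N y
    have hdx := digit_nonneg (k := k) (by omega) N x
    calc gk k x ≤ ∑ n ∈ Finset.range N, cantorTerm k n x + 1 / 2 ^ (N + 1) :=
          gk_le_of_digit_ne_sub_one hk1 hx1 hcantor (by omega)
      _ = ∑ n ∈ Finset.range N, cantorTerm k n y + 1 / 2 ^ (N + 1) := by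
          rw [sum_range_cantorTerm_congr hpre]
      _ ≤ gk k y :=
          le_gk_of_digit_ne_zero hk1 hy1.ne (fun m hm => hpre m hm ▸ hcantor m hm) (by omega)
  · push Not at hcantor
    obtain ⟨m, hm, hbad⟩ := hcantor
    exact (gk_eq_of_digits_eq hx1 hy1.ne (fun j hj => hpre j (by omega)) hbad).le
end

section
/- Let k ≥ 3 be an integer. The generalized Cantor function g_k is continuous on [0,1]. -/
open scoped ENNReal

/-!
On `[0, 1)` the function `g_k` is self-similar: with `Tx = fract (k x)`, it equals `g_k (Tx) / 2`,
`1/2 + g_k (Tx) / 2` or `1/2` according as the first digit `⌊k x⌋` is `0`, `k - 1` or neither.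
Iterating this, `g_k ≤ 2⁻ⁿ` on `[0, k⁻ⁿ)` and `g_k ≥ 1 - 2⁻ⁿ` on `(1 - k⁻ⁿ, 1)`. Two points at
distance `< k⁻ⁿ` then have values within `2⁻ⁿ`: if they share their first digit, the bound is
inherited from `Tx` and `Ty` at scale `k⁻⁽ⁿ⁻¹⁾`; if they straddle a digit boundary then, as
`k ≥ 3`, one side takes the value `1/2` and the other is within `2⁻ⁿ` of it by the endpoint
bounds. Hence `g_k` is uniformly continuous on `[0, 1]`.
-/

section FloorRing

variable {α : Type*} [CommRing α] [LinearOrder α] [IsStrictOrderedRing α] [FloorRing α] {a b : α}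

lemma fract_le_sub_of_floor_eq_add_one (h : ⌊a⌋ = ⌊b⌋ + 1) : Int.fract a ≤ a - b := by
  have hb : b < ⌊b⌋ + 1 := Int.lt_floor_add_one b
  rw [Int.fract, h]
  push_cast
  linarith

lemma one_sub_fract_le_sub_of_floor_eq_add_one (h : ⌊a⌋ = ⌊b⌋ + 1) : 1 - Int.fract b ≤ a - b := by
  have ha : (⌊a⌋ : α) ≤ a := Int.floor_le a
  rw [h] at ha
  push_cast at ha
  rw [Int.fract]
  linarith

end FloorRing

namespace CantorFunction

variable {k : ℕ}

lemma digit_nonneg (hk : 0 < k) (n : ℕ) (x : ℝ) : 0 ≤ digit k n x :=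
  Int.emod_nonneg _ (by exact_mod_cast hk.ne')

lemma digit_le_sub_one (hk : 0 < k) (n : ℕ) (x : ℝ) : digit k n x ≤ (k : ℤ) - 1 := by
  have : digit k n x < k := Int.emod_lt_of_pos _ (by exact_mod_cast hk)
  omega

lemma digit_fract_mul (n : ℕ) (x : ℝ) :
    digit k n (Int.fract ((k : ℝ) * x)) = digit k (n + 1) x := by
  have h : (k : ℝ) ^ (n + 1) * Int.fract ((k : ℝ) * x)
      = (k : ℝ) ^ (n + 1 + 1) * x - ((k * (k ^ n * ⌊(k : ℝ) * x⌋) : ℤ) : ℝ) := by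
    rw [Int.fract]; push_cast; ring
  rw [digit, digit, h, Int.floor_sub_intCast, Int.sub_mul_emod_self_left]

lemma digit_zero_eq_floor (hk : 0 < k) {x : ℝ} (hx : x ∈ Set.Ico (0 : ℝ) 1) :
    digit k 0 x = ⌊(k : ℝ) * x⌋ := by
  have hkR : (0 : ℝ) < k := by exact_mod_cast hk
  rw [digit, pow_one]
  refine Int.emod_eq_of_lt (Int.floor_nonneg.mpr (by nlinarith [hx.1])) ?_
  rw [Int.floor_lt]
  push_cast
  nlinarith [hx.2]

def IsExtremeDigit (k n : ℕ) (x : ℝ) : Prop :=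
  digit k n x = 0 ∨ digit k n x = (k : ℤ) - 1

lemma isExtremeDigit_fract_mul {n : ℕ} {x : ℝ} :
    IsExtremeDigit k n (Int.fract ((k : ℝ) * x)) ↔ IsExtremeDigit k (n + 1) x := by
  simp only [IsExtremeDigit, digit_fract_mul]

noncomputable def cantorTerm (k : ℕ) (x : ℝ) (n : ℕ) : ℝ :=
  (digit k n x : ℝ) / (((k : ℝ) - 1) * 2 ^ (n + 1))

lemma cantorTerm_nonneg (hk : 2 ≤ k) (x : ℝ) (n : ℕ) : 0 ≤ cantorTerm k x n := by
  have hk1 : (1 : ℝ) ≤ (k : ℝ) - 1 := by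
    rw [le_sub_iff_add_le]; exact_mod_cast hk
  have hd : (0 : ℝ) ≤ digit k n x := by exact_mod_cast digit_nonneg (by omega) n x
  unfold cantorTerm
  positivity

lemma cantorTerm_le (hk : 2 ≤ k) (x : ℝ) (n : ℕ) : cantorTerm k x n ≤ 1 / 2 / 2 ^ n := by
  have hk1 : (1 : ℝ) ≤ (k : ℝ) - 1 := by
    rw [le_sub_iff_add_le]; exact_mod_cast hk
  have hd : (digit k n x : ℝ) ≤ (k : ℝ) - 1 := by
    exact_mod_cast digit_le_sub_one (by omega) n x
  calc cantorTerm k x n ≤ ((k : ℝ) - 1) / (((k : ℝ) - 1) * 2 ^ (n + 1)) := by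
        unfold cantorTerm; gcongr
    _ = 1 / 2 / 2 ^ n := by field_simp; ring

lemma summable_cantorTerm (hk : 2 ≤ k) (x : ℝ) : Summable (cantorTerm k x) :=
  (summable_geometric_two' 1).of_nonneg_of_le (cantorTerm_nonneg hk x) (cantorTerm_le hk x)

lemma cantorTerm_succ (n : ℕ) (x : ℝ) :
    cantorTerm k x (n + 1) = cantorTerm k (Int.fract ((k : ℝ) * x)) n / 2 := by
  rw [cantorTerm, cantorTerm, digit_fract_mul, div_div, pow_succ _ (n + 1), mul_assoc]

lemma gk_one : gk k 1 = 1 := if_pos rfl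

lemma gk_of_forall {x : ℝ} (hx : x ≠ 1) (h : ∀ n, IsExtremeDigit k n x) :
    gk k x = ∑' n, cantorTerm k x n := by
  rw [gk, if_neg hx]
  exact if_pos h

open Classical in
lemma gk_of_exists {x : ℝ} (hx : x ≠ 1) (h : ∃ n, ¬IsExtremeDigit k n x) :
    gk k x = ∑ n ∈ Finset.range (Nat.find h), cantorTerm k x n + 1 / 2 ^ (Nat.find h + 1) := by
  have hbad : ¬∀ n, digit k n x = 0 ∨ digit k n x = (k : ℤ) - 1 := not_forall.mpr h
  have hN : sInf {n : ℕ | ¬(digit k n x = 0 ∨ digit k n x = (k : ℤ) - 1)} = Nat.find h :=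
    le_antisymm (Nat.sInf_le (Nat.find_spec h)) (Nat.find_min' h (Nat.sInf_mem h))
  rw [gk, if_neg hx, if_neg hbad, hN]
  rfl

open Classical in
lemma gk_mem_Icc (hk : 2 ≤ k) {x : ℝ} (hx : x ∈ Set.Icc (0 : ℝ) 1) : gk k x ∈ Set.Icc (0 : ℝ) 1 := by
  rcases eq_or_ne x 1 with rfl | hx1
  · simp [gk_one]
  by_cases h : ∀ n, IsExtremeDigit k n x
  · rw [gk_of_forall hx1 h, ← tsum_geometric_two' 1]
    exact ⟨tsum_nonneg (cantorTerm_nonneg hk x),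
      (summable_cantorTerm hk x).tsum_le_tsum (cantorTerm_le hk x) (summable_geometric_two' 1)⟩
  · push Not at h
    rw [gk_of_exists hx1 h]
    set N := Nat.find h
    have hpos : (0 : ℝ) ≤ ∑ n ∈ Finset.range N, cantorTerm k x n :=
      Finset.sum_nonneg fun n _ => cantorTerm_nonneg hk x n
    have hle : ∑ n ∈ Finset.range N, cantorTerm k x n + 1 / 2 / 2 ^ N ≤ 1 := by
      calc ∑ n ∈ Finset.range N, cantorTerm k x n + 1 / 2 / 2 ^ N
          ≤ ∑ n ∈ Finset.range (N + 1), (1 : ℝ) / 2 / 2 ^ n := by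
            rw [Finset.sum_range_succ]
            gcongr with n
            exact cantorTerm_le hk x n
        _ ≤ ∑' n, (1 : ℝ) / 2 / 2 ^ n :=
            (summable_geometric_two' 1).sum_le_tsum _ fun n _ => by positivity
        _ = 1 := tsum_geometric_two' 1
    have hlast : (1 : ℝ) / 2 ^ (N + 1) = 1 / 2 / 2 ^ N := by ring
    rw [hlast]
    exact ⟨by positivity, hle⟩

open Classical in
lemma gk_of_not_isExtremeDigit_zero {x : ℝ} (hx : x ≠ 1) (h : ¬IsExtremeDigit k 0 x) :
    gk k x = 1 / 2 := by
  rw [gk_of_exists hx ⟨0, h⟩, (Nat.find_eq_zero _).mpr h]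
  simp

open Classical in
lemma gk_of_isExtremeDigit_zero (hk : 2 ≤ k) {x : ℝ} (hx : x ∈ Set.Ico (0 : ℝ) 1)
    (h : IsExtremeDigit k 0 x) :
    gk k x = cantorTerm k x 0 + gk k (Int.fract ((k : ℝ) * x)) / 2 := by
  set y := Int.fract ((k : ℝ) * x)
  have hy : y ≠ 1 := (Int.fract_lt_one _).ne
  by_cases hall : ∀ n, IsExtremeDigit k n x
  · rw [gk_of_forall hx.2.ne hall, gk_of_forall hy fun n => isExtremeDigit_fract_mul.mpr (hall _),
      (summable_cantorTerm hk x).tsum_eq_zero_add]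
    simp only [cantorTerm_succ, tsum_div_const, y]
  · push Not at hall
    have hsucc : ∃ n, ¬IsExtremeDigit k (n + 1) x := by
      obtain ⟨_ | n, hn⟩ := hall
      · exact absurd h hn
      · exact ⟨n, hn⟩
    have hally : ∃ n, ¬IsExtremeDigit k n y := by
      simpa only [y, isExtremeDigit_fract_mul] using hsucc
    have hfind : Nat.find hall = Nat.find hally + 1 := by
      rw [Nat.find_comp_succ hall hsucc (not_not.mpr h)]
      congr 1
      exact Nat.find_congr' isExtremeDigit_fract_mul.not.symm
    rw [gk_of_exists hx.2.ne hall, gk_of_exists hy hally, hfind, Finset.sum_range_succ']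
    simp only [cantorTerm_succ, ← Finset.sum_div, y]
    ring

lemma gk_eq_ite (hk : 2 ≤ k) {x : ℝ} (hx : x ∈ Set.Ico (0 : ℝ) 1) :
    gk k x = if ⌊(k : ℝ) * x⌋ = 0 then gk k (Int.fract ((k : ℝ) * x)) / 2
      else if ⌊(k : ℝ) * x⌋ = (k : ℤ) - 1 then 1 / 2 + gk k (Int.fract ((k : ℝ) * x)) / 2
      else 1 / 2 := by
  have hd : digit k 0 x = ⌊(k : ℝ) * x⌋ := digit_zero_eq_floor (by omega) hx
  have hk1 : (k : ℝ) - 1 ≠ 0 := by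
    have : (2 : ℝ) ≤ k := by exact_mod_cast hk
    linarith
  split_ifs with h0 h1
  · rw [gk_of_isExtremeDigit_zero hk hx (.inl (hd.trans h0)), cantorTerm, hd, h0]
    simp
  · rw [gk_of_isExtremeDigit_zero hk hx (.inr (hd.trans h1)), cantorTerm, hd, h1]
    push_cast
    field_simp
  · exact gk_of_not_isExtremeDigit_zero hx.2.ne (by rw [IsExtremeDigit, hd]; tauto)

lemma gk_le_of_pow_mul_lt_one (hk : 2 ≤ k) (n : ℕ) {x : ℝ} (hx : x ∈ Set.Ico (0 : ℝ) 1)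
    (h : (k : ℝ) ^ n * x < 1) : gk k x ≤ (1 / 2) ^ n := by
  induction n generalizing x with
  | zero => simpa using (gk_mem_Icc hk (Set.Ico_subset_Icc_self hx)).2
  | succ n ih =>
    have hk1 : (1 : ℝ) ≤ k := by exact_mod_cast (by omega : 1 ≤ k)
    have hkx : (k : ℝ) * x < 1 :=
      (mul_le_mul_of_nonneg_right (le_self_pow₀ hk1 n.succ_ne_zero) hx.1).trans_lt h
    have hkx0 : 0 ≤ (k : ℝ) * x := by nlinarith [hx.1]
    have hfract : Int.fract ((k : ℝ) * x) = k * x := Int.fract_eq_self.mpr ⟨hkx0, hkx⟩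
    have hT := ih (x := Int.fract ((k : ℝ) * x)) ⟨Int.fract_nonneg _, Int.fract_lt_one _⟩
      (by rw [hfract, ← mul_assoc, ← pow_succ]; exact h)
    rw [gk_eq_ite hk hx, if_pos (Int.floor_eq_zero_iff.mpr ⟨hkx0, hkx⟩), pow_succ]
    linarith

lemma one_sub_le_gk_of_pow_mul_lt_one (hk : 2 ≤ k) (n : ℕ) {y : ℝ} (hy : y ∈ Set.Ico (0 : ℝ) 1)
    (h : (k : ℝ) ^ n * (1 - y) < 1) : 1 - (1 / 2) ^ n ≤ gk k y := by
  induction n generalizing y with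
  | zero => simpa using (gk_mem_Icc hk (Set.Ico_subset_Icc_self hy)).1
  | succ n ih =>
    have hk1 : (1 : ℝ) ≤ k := by exact_mod_cast (by omega : 1 ≤ k)
    have hky : (k : ℝ) * (1 - y) < 1 :=
      (mul_le_mul_of_nonneg_right (le_self_pow₀ hk1 n.succ_ne_zero) (by linarith [hy.2])).trans_lt h
    have hfloor : ⌊(k : ℝ) * y⌋ = (k : ℤ) - 1 := by
      rw [Int.floor_eq_iff]
      push_cast
      constructor <;> nlinarith [hy.2]
    have hfract : Int.fract ((k : ℝ) * y) = k * y - (k - 1) := by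
      rw [Int.fract, hfloor]; push_cast; ring
    have hT := ih (y := Int.fract ((k : ℝ) * y)) ⟨Int.fract_nonneg _, Int.fract_lt_one _⟩
      (by rw [hfract, pow_succ] at *; linarith)
    rw [gk_eq_ite hk hy, if_neg (by omega), if_pos hfloor, pow_succ]
    linarith

lemma abs_gk_sub_le_of_floor_eq_add_one (hk : 3 ≤ k) (n : ℕ) {x y : ℝ}
    (hx : x ∈ Set.Ico (0 : ℝ) 1) (hy : y ∈ Set.Ico (0 : ℝ) 1)
    (hfloor : ⌊(k : ℝ) * x⌋ = ⌊(k : ℝ) * y⌋ + 1) (h : (k : ℝ) ^ n * (k * x - k * y) < 1) :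
    |gk k x - gk k y| ≤ (1 / 2) ^ (n + 1) := by
  have hk2 : 2 ≤ k := by omega
  have hk0 : (0 : ℝ) < k := by positivity
  have hb0 : 0 ≤ ⌊(k : ℝ) * y⌋ := Int.floor_nonneg.mpr (by nlinarith [hy.1])
  have hak : ⌊(k : ℝ) * x⌋ < k := by
    rw [Int.floor_lt]; push_cast; nlinarith [hx.2]
  have htx : Int.fract ((k : ℝ) * x) ∈ Set.Ico (0 : ℝ) 1 := ⟨Int.fract_nonneg _, Int.fract_lt_one _⟩
  have hty : Int.fract ((k : ℝ) * y) ∈ Set.Ico (0 : ℝ) 1 := ⟨Int.fract_nonneg _, Int.fract_lt_one _⟩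
  have hlow := gk_le_of_pow_mul_lt_one hk2 n htx
    ((mul_le_mul_of_nonneg_left (fract_le_sub_of_floor_eq_add_one hfloor) (by positivity)).trans_lt h)
  have hhigh := one_sub_le_gk_of_pow_mul_lt_one hk2 n hty
    ((mul_le_mul_of_nonneg_left (one_sub_fract_le_sub_of_floor_eq_add_one hfloor)
      (by positivity)).trans_lt h)
  have hgx := gk_mem_Icc hk2 (Set.Ico_subset_Icc_self htx)
  have hgy := gk_mem_Icc hk2 (Set.Ico_subset_Icc_self hty)
  rw [gk_eq_ite hk2 hx, gk_eq_ite hk2 hy, pow_succ, hfloor]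
  split_ifs <;> first | omega | (rw [abs_le]; constructor <;> linarith [hgx.1, hgx.2, hgy.1, hgy.2])

lemma abs_gk_sub_le (hk : 3 ≤ k) (n : ℕ) {x y : ℝ} (hx : x ∈ Set.Ico (0 : ℝ) 1)
    (hy : y ∈ Set.Ico (0 : ℝ) 1) (hyx : y ≤ x) (h : (k : ℝ) ^ n * (x - y) < 1) :
    |gk k x - gk k y| ≤ (1 / 2) ^ n := by
  induction n generalizing x y with
  | zero =>
    have hgx := gk_mem_Icc (k := k) (by omega) (Set.Ico_subset_Icc_self hx)
    have hgy := gk_mem_Icc (k := k) (by omega) (Set.Ico_subset_Icc_self hy)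
    rw [pow_zero, abs_le]
    constructor <;> linarith [hgx.1, hgx.2, hgy.1, hgy.2]
  | succ n ih =>
    have hkR : (1 : ℝ) ≤ k := by exact_mod_cast (by omega : 1 ≤ k)
    have hkyx : (k : ℝ) * y ≤ k * x := by gcongr
    have hscale : (k : ℝ) ^ n * (k * x - k * y) < 1 := by
      rw [← mul_sub, ← mul_assoc, ← pow_succ]; exact h
    have hkxy : (k : ℝ) * x - k * y < 1 :=
      (le_mul_of_one_le_left (by linarith) (one_le_pow₀ hkR)).trans_lt hscale
    have hba : ⌊(k : ℝ) * y⌋ ≤ ⌊(k : ℝ) * x⌋ := Int.floor_le_floor hkyx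
    have hab : ⌊(k : ℝ) * x⌋ ≤ ⌊(k : ℝ) * y⌋ + 1 := by
      rw [← Int.floor_add_one]; exact Int.floor_le_floor (by linarith)
    obtain hsame | hstraddle : ⌊(k : ℝ) * x⌋ = ⌊(k : ℝ) * y⌋ ∨ ⌊(k : ℝ) * x⌋ = ⌊(k : ℝ) * y⌋ + 1 := by
      omega
    · have hsub : Int.fract ((k : ℝ) * x) - Int.fract ((k : ℝ) * y) = k * x - k * y := by
        rw [Int.fract, Int.fract, hsame]; ring
      have hT := ih (x := Int.fract ((k : ℝ) * x)) (y := Int.fract ((k : ℝ) * y))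
        ⟨Int.fract_nonneg _, Int.fract_lt_one _⟩ ⟨Int.fract_nonneg _, Int.fract_lt_one _⟩
        (by linarith) (by rwa [hsub])
      rw [abs_le] at hT
      rw [gk_eq_ite (by omega) hx, gk_eq_ite (by omega) hy, pow_succ, hsame]
      split_ifs <;> rw [abs_le] <;> constructor <;> linarith [hT.1, hT.2]
    · exact abs_gk_sub_le_of_floor_eq_add_one hk n hx hy hstraddle hscale

lemma abs_gk_sub_le_of_mem_Icc (hk : 3 ≤ k) (n : ℕ) {x y : ℝ} (hx : x ∈ Set.Icc (0 : ℝ) 1)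
    (hy : y ∈ Set.Icc (0 : ℝ) 1) (h : (k : ℝ) ^ n * |x - y| < 1) :
    |gk k x - gk k y| ≤ (1 / 2) ^ n := by
  wlog hyx : y ≤ x generalizing x y
  · rw [abs_sub_comm]
    exact this hy hx (by rwa [abs_sub_comm]) (le_of_not_ge hyx)
  rw [abs_of_nonneg (sub_nonneg.mpr hyx)] at h
  rcases hx.2.eq_or_lt with rfl | hx1
  · rcases hy.2.eq_or_lt with rfl | hy1
    · simp
    · have hlow := one_sub_le_gk_of_pow_mul_lt_one (by omega) n ⟨hy.1, hy1⟩ h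
      have hup := (gk_mem_Icc (k := k) (by omega) hy).2
      rw [gk_one, abs_le]
      constructor <;> linarith
  · exact abs_gk_sub_le hk n ⟨hx.1, hx1⟩ ⟨hy.1, hyx.trans_lt hx1⟩ hyx h

end CantorFunction

/-- `g_k` is continuous on `[0,1]`. -/
theorem stmt7 (k : ℕ) (hk : 3 ≤ k) :
    ContinuousOn (gk k) (Set.Icc (0 : ℝ) 1) := by
  refine UniformContinuousOn.continuousOn (Metric.uniformContinuousOn_iff.mpr fun ε hε => ?_)
  obtain ⟨n, hn⟩ := exists_pow_lt_of_lt_one hε (by norm_num : (1 / 2 : ℝ) < 1)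
  have hkn : (0 : ℝ) < (k : ℝ) ^ n := by positivity
  refine ⟨((k : ℝ) ^ n)⁻¹, inv_pos.mpr hkn, fun x hx y hy hxy => ?_⟩
  rw [Real.dist_eq] at hxy ⊢
  refine (CantorFunction.abs_gk_sub_le_of_mem_Icc hk n hx hy ?_).trans_lt hn
  simpa [hkn.ne'] using mul_lt_mul_of_pos_left hxy hkn
end

section
/- Let k ≥ 3 be an integer. For every sequence a : ℕ → ℕ with a(n) ∈ {0,1} for all n, one has g_k( ∑_{n≥0} a(n)·(k-1)/k^{n+1} ) = ∑_{n≥0} a(n)/2^{n+1}. -/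
open scoped ENNReal

section Aux
variable {k : ℕ}

lemma hk0' (hk : 2 ≤ k) : (0:ℝ) < k := by exact_mod_cast Nat.lt_of_lt_of_le Nat.zero_lt_two hk

lemma hr_lt (hk : 2 ≤ k) : (1:ℝ)/k < 1 := by
  rw [div_lt_one (hk0' hk)]
  exact_mod_cast Nat.lt_of_lt_of_le Nat.one_lt_two hk

lemma geom_summable (hk : 2 ≤ k) : Summable (fun n : ℕ => ((k:ℝ)-1)/(k:ℝ)^(n+1)) := by
  have hk0 := hk0' hk
  have hne : (k:ℝ) ≠ 0 := ne_of_gt hk0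
  have := (summable_geometric_of_lt_one (by positivity) (hr_lt hk)).mul_left (((k:ℝ)-1)/k)
  refine this.congr fun n => ?_
  rw [div_pow, one_pow, div_mul_div_comm, mul_one, ← pow_succ']

lemma geom_one (hk : 2 ≤ k) : ∑' n : ℕ, ((k:ℝ)-1)/(k:ℝ)^(n+1) = 1 := by
  have hk0 := hk0' hk
  have hne : (k:ℝ) ≠ 0 := ne_of_gt hk0
  have hk1 : (1:ℝ) < k := by exact_mod_cast Nat.lt_of_lt_of_le Nat.one_lt_two hk
  have hne1 : (k:ℝ) - 1 ≠ 0 := by intro h; nlinarith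
  have h1 : ∑' n : ℕ, (((k:ℝ)-1)/(k:ℝ)) * (1/(k:ℝ))^n = (((k:ℝ)-1)/(k:ℝ)) * (1 - 1/(k:ℝ))⁻¹ := by
    rw [tsum_mul_left, tsum_geometric_of_lt_one (by positivity) (hr_lt hk)]
  have h2 : ∀ n : ℕ, (((k:ℝ)-1)/(k:ℝ)) * (1/(k:ℝ))^n = ((k:ℝ)-1)/(k:ℝ)^(n+1) := by
    intro n; rw [div_pow, one_pow, div_mul_div_comm, mul_one, ← pow_succ']
  rw [← tsum_congr h2, h1]
  rw [show (1 - 1/(k:ℝ)) = ((k:ℝ)-1)/k by field_simp]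
  rw [inv_div]
  field_simp

lemma cast_le_ksub1 (hk : 2 ≤ k) {b : ℕ} (hb : b ≤ k - 1) : (b : ℝ) ≤ (k:ℝ) - 1 := by
  have : ((k - 1 : ℕ) : ℝ) = (k:ℝ) - 1 := by
    rw [Nat.cast_sub (by omega)]; norm_num
  rw [← this]; exact_mod_cast hb

lemma summable_aux (hk : 2 ≤ k) (b : ℕ → ℕ) (hb : ∀ m, b m ≤ k - 1) :
    Summable (fun m : ℕ => (b m : ℝ) / (k:ℝ)^(m+1)) := by
  have hk0 := hk0' hk
  refine Summable.of_nonneg_of_le (fun m => by positivity) (fun m => ?_) (geom_summable hk)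
  exact div_le_div_of_nonneg_right (cast_le_ksub1 hk (hb m)) (by positivity)

lemma tsum_lt_one (hk : 2 ≤ k) (b : ℕ → ℕ) (hb : ∀ m, b m ≤ k - 1) (m : ℕ) (hm : b m ≠ k - 1) :
    ∑' n : ℕ, (b n : ℝ) / (k:ℝ)^(n+1) < 1 := by
  have hk0 := hk0' hk
  rw [← geom_one hk]
  refine Summable.tsum_lt_tsum (i := m)
    (fun n => div_le_div_of_nonneg_right (cast_le_ksub1 hk (hb n)) (by positivity))
    ?_ (summable_aux hk b hb) (geom_summable hk)
  have hlt : (b m : ℝ) < (k:ℝ) - 1 := by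
    have h1 : b m < k - 1 := lt_of_le_of_ne (hb m) hm
    have h2 : ((k - 1 : ℕ) : ℝ) = (k:ℝ) - 1 := by rw [Nat.cast_sub (by omega)]; norm_num
    rw [← h2]; exact_mod_cast h1
  exact div_lt_div_of_pos_right hlt (by positivity)

lemma tail_geom (hk : 2 ≤ k) (M : ℕ) :
    ∑' j : ℕ, ((k:ℝ)-1)/(k:ℝ)^((j + M) + 1) = 1/(k:ℝ)^M := by
  have hk0 := hk0' hk
  have h : ∀ j : ℕ, ((k:ℝ)-1)/(k:ℝ)^((j+M)+1) = (1/(k:ℝ)^M) * (((k:ℝ)-1)/(k:ℝ)^(j+1)) := by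
    intro j
    rw [one_div_mul_eq_div, div_div, ← pow_add]
    congr 2
    omega
  rw [tsum_congr h, tsum_mul_left, geom_one hk, mul_one]

lemma digit_eq (hk : 2 ≤ k) (b : ℕ → ℕ) (hb : ∀ m, b m ≤ k - 1)
    (hinf : ∀ n, ∃ m, n < m ∧ b m ≠ k - 1) (n : ℕ) :
    digit k n (∑' m : ℕ, (b m : ℝ) / (k : ℝ) ^ (m + 1)) = (b n : ℤ) := by
  have hk0 := hk0' hk
  have hne : (k:ℝ) ≠ 0 := ne_of_gt hk0
  have hsum := summable_aux hk b hb
  set x := ∑' m : ℕ, (b m : ℝ) / (k : ℝ) ^ (m + 1) with hx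
  set t := ∑' j : ℕ, (b (j + (n+1)) : ℝ) / (k : ℝ) ^ (j + 1) with ht
  have hsplit : (∑ m ∈ Finset.range (n+1), (b m : ℝ) / (k:ℝ)^(m+1))
      + ∑' j : ℕ, (b (j + (n+1)) : ℝ) / (k:ℝ)^((j + (n+1)) + 1) = x :=
    Summable.sum_add_tsum_nat_add (n+1) hsum
  set S : ℤ := ∑ m ∈ Finset.range (n+1), (b m : ℤ) * (k:ℤ)^(n-m) with hS
  have hxS : (k:ℝ)^(n+1) * x = (S : ℝ) + t := by
    rw [← hsplit, mul_add]
    congr 1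
    · rw [Finset.mul_sum, hS]
      push_cast
      refine Finset.sum_congr rfl fun m hm => ?_
      have hmn : m + 1 + (n - m) = n + 1 := by
        have := Finset.mem_range.mp hm; omega
      rw [mul_div_assoc', mul_comm, mul_div_assoc]
      congr 1
      rw [← hmn, pow_add]
      field_simp
    · rw [ht, ← tsum_mul_left]
      refine tsum_congr fun j => ?_
      have hpow : (k:ℝ)^(j+(n+1)+1) = (k:ℝ)^(n+1) * (k:ℝ)^(j+1) := by
        rw [← pow_add]; congr 1; ring
      rw [hpow, ← mul_div_assoc, mul_div_mul_left _ _ (by positivity : ((k:ℝ)^(n+1)) ≠ 0)]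
  have ht0 : 0 ≤ t := tsum_nonneg fun j => by positivity
  have ht1 : t < 1 := by
    obtain ⟨m, hm1, hm2⟩ := hinf n
    refine tsum_lt_one hk (fun j => b (j + (n+1))) (fun j => hb _) (m - (n+1)) ?_
    show b (m - (n+1) + (n+1)) ≠ k - 1
    rwa [Nat.sub_add_cancel (by omega)]
  have hfloor : ⌊(k:ℝ)^(n+1) * x⌋ = S := by
    rw [hxS, Int.floor_eq_iff]
    constructor
    · linarith
    · linarith
  rw [digit, hfloor, hS, Finset.sum_range_succ, Nat.sub_self, pow_zero, mul_one]
  have hdvd : (k:ℤ) ∣ ∑ m ∈ Finset.range n, (b m : ℤ) * (k:ℤ)^(n-m) := by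
    refine Finset.dvd_sum fun m hm => ?_
    exact Dvd.dvd.mul_left (dvd_pow_self (k:ℤ) (by have := Finset.mem_range.mp hm; omega)) _
  obtain ⟨c, hc⟩ := hdvd
  have hbn : (b n:ℤ) < k := by exact_mod_cast (by have := hb n; omega : b n < k)
  have hbn0 : (0:ℤ) ≤ (b n:ℤ) := by positivity
  rw [hc, show (k:ℤ)*c + (b n:ℤ) = (b n:ℤ) + (k:ℤ)*c from add_comm _ _,
    Int.add_mul_emod_self_left, Int.emod_eq_of_lt hbn0 hbn]

end Aux

/-- `g_k` maps the point of `C_k` coded by a 0-1 sequence `a`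
to the corresponding binary number. -/
theorem stmt10 (k : ℕ) (hk : 3 ≤ k) (a : ℕ → ℕ) (ha : ∀ n, a n = 0 ∨ a n = 1) :
    gk k (∑' n : ℕ, (a n : ℝ) * ((k : ℝ) - 1) / (k : ℝ) ^ (n + 1)) =
      ∑' n : ℕ, (a n : ℝ) / 2 ^ (n + 1) := by
  classical
  have hk2 : 2 ≤ k := by omega
  have hksub : ((k - 1 : ℕ) : ℝ) = (k:ℝ) - 1 := by rw [Nat.cast_sub (by omega)]; norm_num
  have hksubZ : ((k - 1 : ℕ) : ℤ) = (k:ℤ) - 1 := by rw [Nat.cast_sub (by omega)]; norm_num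
  have hkne1 : (k:ℝ) - 1 ≠ 0 := by
    have : (3:ℝ) ≤ k := by exact_mod_cast hk
    intro h; linarith
  have ha1 : ∀ n, a n ≤ 1 := fun n => by rcases ha n with h|h <;> omega
  set b : ℕ → ℕ := fun n => a n * (k - 1) with hbdef
  have hb : ∀ m, b m ≤ k - 1 := fun m => by
    rcases ha m with h|h <;> simp [hbdef, h]
  have hcast : ∀ n, ((b n : ℝ)) = (a n : ℝ) * ((k:ℝ)-1) := by
    intro n
    show (((a n * (k-1) : ℕ)) : ℝ) = _
    push_cast [hksub]
    ring
  have hxeq : (∑' n : ℕ, (a n : ℝ) * ((k : ℝ) - 1) / (k : ℝ) ^ (n + 1))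
      = ∑' n : ℕ, (b n : ℝ) / (k:ℝ)^(n+1) := tsum_congr fun n => by rw [hcast]
  -- RHS summability
  have hsumR : Summable (fun n : ℕ => (a n : ℝ) / 2^(n+1)) := by
    have := summable_aux (k := 2) le_rfl a ha1
    simpa using this
  rw [hxeq]
  by_cases hP : ∃ N, ∀ m, N ≤ m → a m = 1
  · -- eventually all ones
    have hMspec : ∀ m, Nat.find hP ≤ m → a m = 1 := Nat.find_spec hP
    rcases Nat.eq_zero_or_pos (Nat.find hP) with hM0 | hMpos
    · -- Case A : all ones, x = 1
      have hall1 : ∀ n, a n = 1 := fun n => hMspec n (hM0 ▸ Nat.zero_le n)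
      have hx1 : (∑' n : ℕ, (b n : ℝ) / (k:ℝ)^(n+1)) = 1 := by
        rw [tsum_congr (fun n => by rw [hcast, hall1 n]; push_cast; ring_nf :
          ∀ n : ℕ, (b n : ℝ) / (k:ℝ)^(n+1) = ((k:ℝ)-1)/(k:ℝ)^(n+1))]
        exact geom_one hk2
      rw [hx1]
      have hRHS : (∑' n : ℕ, (a n : ℝ) / 2^(n+1)) = 1 := by
        have h2 : ∑' n : ℕ, (((2:ℕ):ℝ)-1)/((2:ℕ):ℝ)^(n+1) = 1 := geom_one le_rfl
        rw [tsum_congr (fun n => by rw [hall1 n]; norm_num :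
          ∀ n : ℕ, (a n : ℝ) / 2^(n+1) = (1:ℝ)/2^(n+1))]
        push_cast at h2
        norm_num at h2 ⊢
        convert h2 using 1
      rw [hRHS]
      simp [gk]
    · -- Case C : eventually ones, a M' = 0 where M = M'+1
      set M' := Nat.find hP - 1 with hM'def
      have hMeq : Nat.find hP = M' + 1 := by omega
      have hMspec : ∀ m, M' + 1 ≤ m → a m = 1 := fun m hm => hMspec m (by omega)
      have haM' : a M' = 0 := by
        have hmin := Nat.find_min hP (show M' < Nat.find hP by omega)
        push_neg at hmin
        obtain ⟨m, hm1, hm2⟩ := hmin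
        rcases Nat.eq_or_lt_of_le hm1 with h | h
        · rcases ha M' with h0 | h0
          · exact h0
          · exact absurd (h ▸ h0) hm2
        · exact absurd (hMspec m (by omega)) hm2
      set c : ℕ → ℕ := fun n => if n < M' then b n else if n = M' then 1 else 0 with hcdef
      have hc : ∀ m, c m ≤ k - 1 := by
        intro m
        simp only [hcdef]
        split
        · exact hb m
        · split <;> omega
      have hcinf : ∀ n, ∃ m, n < m ∧ c m ≠ k - 1 := by
        intro n
        refine ⟨max (n+1) (M'+1), by omega, ?_⟩
        have h1 : ¬ (max (n+1) (M'+1) < M') := by omega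
        have h2 : ¬ (max (n+1) (M'+1) = M') := by omega
        simp only [hcdef, if_neg h1, if_neg h2]
        omega
      have hsumb := summable_aux hk2 b hb
      have hsumc := summable_aux hk2 c hc
      -- x = sum of c
      have hXc : (∑' n : ℕ, (b n : ℝ) / (k:ℝ)^(n+1)) = ∑' n : ℕ, (c n : ℝ) / (k:ℝ)^(n+1) := by
        rw [← Summable.sum_add_tsum_nat_add (M'+1) hsumb, ← Summable.sum_add_tsum_nat_add (M'+1) hsumc]
        have htb : ∑' j : ℕ, (b (j + (M'+1)) : ℝ) / (k:ℝ)^((j + (M'+1)) + 1)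
            = 1/(k:ℝ)^(M'+1) := by
          rw [tsum_congr (fun j => ?_), tail_geom hk2 (M'+1)]
          rw [hcast, hMspec (j + (M'+1)) (by omega)]
          push_cast; ring_nf
        have htc : ∑' j : ℕ, (c (j + (M'+1)) : ℝ) / (k:ℝ)^((j + (M'+1)) + 1) = 0 := by
          rw [tsum_congr (fun j => ?_), tsum_zero]
          have h1 : ¬ (j + (M'+1) < M') := by omega
          have h2 : ¬ (j + (M'+1) = M') := by omega
          simp [hcdef, if_neg h1, if_neg h2]
        rw [htb, htc, add_zero, Finset.sum_range_succ, Finset.sum_range_succ]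
        have hbM' : (b M' : ℝ) = 0 := by rw [hcast, haM']; norm_num
        have hcM' : (c M' : ℝ) = 1 := by simp [hcdef]
        have hcb : ∀ m ∈ Finset.range M', (c m : ℝ) / (k:ℝ)^(m+1) = (b m : ℝ) / (k:ℝ)^(m+1) := by
          intro m hm
          have := Finset.mem_range.mp hm
          simp [hcdef, if_pos this]
        rw [Finset.sum_congr rfl hcb, hbM', hcM']
        ring
      rw [hXc]
      -- digits
      have hdig : ∀ n, digit k n (∑' n : ℕ, (c n : ℝ) / (k:ℝ)^(n+1)) = (c n : ℤ) :=
        digit_eq hk2 c hc hcinf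
      have hXlt : (∑' n : ℕ, (c n : ℝ) / (k:ℝ)^(n+1)) < 1 := by
        refine tsum_lt_one hk2 c hc (M'+1) ?_
        have h1 : ¬ (M'+1 < M') := by omega
        have h2 : ¬ (M'+1 = M') := by omega
        simp only [hcdef, if_neg h1, if_neg h2]
        omega
      have hXne : (∑' n : ℕ, (c n : ℝ) / (k:ℝ)^(n+1)) ≠ 1 := ne_of_lt hXlt
      have hk3Z : (3:ℤ) ≤ (k:ℤ) := by exact_mod_cast hk
      set X := ∑' n : ℕ, (c n : ℝ) / (k:ℝ)^(n+1) with hXdef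
      have hmem : M' ∈ {n : ℕ | ¬(digit k n X = 0 ∨ digit k n X = (k : ℤ) - 1)} := by
        simp only [Set.mem_setOf_eq, hdig M']
        have : (c M' : ℤ) = 1 := by simp [hcdef]
        rw [this]
        push_neg
        constructor <;> omega
      have hnotmem : ∀ m, m < M' → m ∉ {n : ℕ | ¬(digit k n X = 0 ∨ digit k n X = (k : ℤ) - 1)} := by
        intro m hm
        simp only [Set.mem_setOf_eq, hdig m, not_not]
        have hcm : (c m : ℤ) = (b m : ℤ) := by simp [hcdef, if_pos hm]
        rw [hcm]
        rcases ha m with h | h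
        · left; simp [hbdef, h]
        · right
          show (((a m * (k-1) : ℕ)) : ℤ) = (k:ℤ) - 1
          rw [h, one_mul, hksubZ]
      have hInf : sInf {n : ℕ | ¬(digit k n X = 0 ∨ digit k n X = (k : ℤ) - 1)} = M' := by
        refine le_antisymm (Nat.sInf_le hmem) (le_of_not_gt fun h => ?_)
        exact hnotmem _ h (Nat.sInf_mem ⟨_, hmem⟩)
      have hnotall : ¬ ∀ n, digit k n X = 0 ∨ digit k n X = (k : ℤ) - 1 := by
        intro hall
        exact hmem (hall M')
      rw [gk, if_neg hXne, if_neg hnotall, hInf]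
      -- finite sum terms
      have hterm : ∀ m ∈ Finset.range M',
          ((digit k m X : ℝ)) / (((k:ℝ)-1) * 2^(m+1)) = (a m : ℝ) / 2^(m+1) := by
        intro m hm
        have hmlt := Finset.mem_range.mp hm
        rw [hdig m]
        have hcm : ((c m : ℤ) : ℝ) = (a m : ℝ) * ((k:ℝ)-1) := by
          have : (c m : ℕ) = b m := by simp [hcdef, if_pos hmlt]
          rw [this]
          push_cast
          rw [← hcast]
        have hd1 : ((k:ℝ)-1) * 2^(m+1) ≠ 0 := mul_ne_zero hkne1 (by positivity)
        rw [hcm, div_eq_div_iff hd1 (by positivity)]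
        ring
      rw [Finset.sum_congr rfl hterm]
      -- now compute RHS
      have hRHS : (∑' n : ℕ, (a n : ℝ) / 2^(n+1))
          = (∑ n ∈ Finset.range M', (a n : ℝ) / 2^(n+1)) + 1/2^(M'+1) := by
        rw [← Summable.sum_add_tsum_nat_add (M'+1) hsumR]
        have htail : ∑' j : ℕ, (a (j + (M'+1)) : ℝ) / 2^((j + (M'+1)) + 1) = 1/2^(M'+1) := by
          have h2 := tail_geom (k := 2) le_rfl (M'+1)
          rw [tsum_congr (fun j => ?_)]
          · simpa using h2
          · rw [hMspec (j + (M'+1)) (by omega)]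
            norm_num
        rw [htail, Finset.sum_range_succ, haM']
        norm_num
      rw [hRHS]
  · -- Case B : infinitely many zeros
    push_neg at hP
    have hinf : ∀ n, ∃ m, n < m ∧ b m ≠ k - 1 := by
      intro n
      obtain ⟨m, hm1, hm2⟩ := hP (n+1)
      refine ⟨m, by omega, ?_⟩
      have : a m = 0 := by rcases ha m with h|h; exact h; exact absurd h hm2
      simp [hbdef, this]
      omega
    have hdig : ∀ n, digit k n (∑' n : ℕ, (b n : ℝ) / (k:ℝ)^(n+1)) = (b n : ℤ) :=
      digit_eq hk2 b hb hinf
    have hXlt : (∑' n : ℕ, (b n : ℝ) / (k:ℝ)^(n+1)) < 1 := by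
      obtain ⟨m, hm1, hm2⟩ := hinf 0
      exact tsum_lt_one hk2 b hb m hm2
    have hXne : (∑' n : ℕ, (b n : ℝ) / (k:ℝ)^(n+1)) ≠ 1 := ne_of_lt hXlt
    set X := ∑' n : ℕ, (b n : ℝ) / (k:ℝ)^(n+1) with hXdef
    have hall : ∀ n, digit k n X = 0 ∨ digit k n X = (k : ℤ) - 1 := by
      intro n
      rw [hdig n]
      rcases ha n with h | h
      · left; simp [hbdef, h]
      · right
        show (((a n * (k-1) : ℕ)) : ℤ) = (k:ℤ) - 1
        rw [h, one_mul, hksubZ]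
    rw [gk, if_neg hXne, if_pos hall]
    refine tsum_congr fun n => ?_
    rw [hdig n]
    have hcm : ((b n : ℤ) : ℝ) = (a n : ℝ) * ((k:ℝ)-1) := by
      push_cast
      rw [← hcast]
    have hd1 : ((k:ℝ)-1) * 2^(n+1) ≠ 0 := mul_ne_zero hkne1 (by positivity)
    rw [hcm, div_eq_div_iff hd1 (by positivity)]
    ring
end

section
/- Let k ≥ 3 be an integer, and suppose 0 ≤ a < 1/k and (k-1)/k < b ≤ 1. Then the survivor set W_k(a,b) is contained in the generalized Cantor set C_k. -/
open scoped ENNReal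

/-- for a hole containing `[1/k, (k-1)/k]`, the survivor set lies in `C_k`. -/
theorem stmt14 (k : ℕ) (hk : 3 ≤ k) (a b : ℝ) (ha : 0 ≤ a) (ha' : a < 1 / (k : ℝ))
    (hb' : ((k : ℝ) - 1) / k < b) (hb : b ≤ 1) :
    W k a b ⊆ Ck k := by
  intro x hx
  obtain ⟨⟨hx0, hx1⟩, hav⟩ := hx
  have hkZ : (3:ℤ) ≤ (k:ℤ) := by exact_mod_cast hk
  have hk0 : (0:ℝ) < k := by
    have : (3:ℝ) ≤ k := by exact_mod_cast hk
    linarith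
  set y : ℕ → ℝ := fun n => (Tmap k)^[n] x with hy
  have hstep : ∀ n, y (n+1) = (k:ℝ) * y n - ⌊(k:ℝ) * y n⌋ := by
    intro n
    show (Tmap k)^[n+1] x = _
    rw [Function.iterate_succ_apply']
    rfl
  have hy01 : ∀ n, 0 ≤ y n ∧ y n < 1 := by
    intro n
    cases n with
    | zero => exact ⟨hx0, hx1⟩
    | succ m =>
      have h : y (m+1) = Int.fract ((k:ℝ) * y m) := by
        show (Tmap k)^[m+1] x = _
        rw [Function.iterate_succ_apply']
        rfl
      rw [h]
      exact ⟨Int.fract_nonneg _, Int.fract_lt_one _⟩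
  have hfloor : ∀ n, ⌊(k:ℝ) * y n⌋ = 0 ∨ ⌊(k:ℝ) * y n⌋ = (k:ℤ) - 1 := by
    intro n
    have hnot := hav n
    have hyn := hy01 n
    rcases le_or_gt (y n) a with h1 | h1
    · left
      rw [Int.floor_eq_zero_iff]
      constructor
      · exact mul_nonneg hk0.le hyn.1
      · have hlt : y n < 1/k := lt_of_le_of_lt h1 ha'
        calc (k:ℝ) * y n < k * (1/k) := by nlinarith
        _ = 1 := by field_simp
    · have h2 : b ≤ y n := by
        by_contra hc
        exact hnot ⟨h1, lt_of_not_ge hc⟩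
      right
      have hlb : (k:ℝ) - 1 ≤ (k:ℝ) * y n := by
        have h3 : ((k:ℝ) - 1) / k < y n := lt_of_lt_of_le hb' h2
        calc (k:ℝ) - 1 = ((k:ℝ) - 1)/k * k := by field_simp
        _ ≤ y n * k := by nlinarith
        _ = (k:ℝ) * y n := by ring
      have hub : (k:ℝ) * y n < k := by nlinarith [hyn.2]
      rw [Int.floor_eq_iff]
      push_cast
      constructor <;> linarith
  have hfnn : ∀ n, (0:ℤ) ≤ ⌊(k:ℝ) * y n⌋ := by
    intro n; rcases hfloor n with h | h <;> omega
  set A : ℕ → ℕ := fun n => (⌊(k:ℝ) * y n⌋).toNat with hA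
  have hAcast : ∀ n, (A n : ℝ) = (⌊(k:ℝ) * y n⌋ : ℝ) := by
    intro n
    have h := Int.toNat_of_nonneg (hfnn n)
    exact_mod_cast congrArg (fun z : ℤ => (z : ℝ)) h
  have hAvals : ∀ n, A n = 0 ∨ A n = k - 1 := by
    intro n
    rcases hfloor n with h | h
    · left; simp [hA, h]
    · right
      have : A n = ((k:ℤ) - 1).toNat := by rw [hA]; simp [h]
      rw [this]; omega
  refine ⟨A, hAvals, ?_⟩
  have hpart : ∀ N, ∑ n ∈ Finset.range N, (A n : ℝ) / (k:ℝ) ^ (n+1) = x - y N / (k:ℝ) ^ N := by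
    intro N
    induction N with
    | zero => simp [hy]
    | succ m ih =>
      rw [Finset.sum_range_succ, ih, hAcast m, hstep m]
      generalize ((⌊(k:ℝ) * y m⌋ : ℤ) : ℝ) = F
      have hkne : (k:ℝ) ≠ 0 := hk0.ne'
      field_simp
      ring
  have hk1 : (1:ℝ) < k := by
    have h3 : (3:ℝ) ≤ k := by exact_mod_cast hk
    linarith
  have hnn : ∀ n, 0 ≤ (A n : ℝ) / (k:ℝ) ^ (n+1) := by
    intro n; positivity
  have hb1 : ∀ N, y N / (k:ℝ) ^ N ≤ (1/(k:ℝ))^N := by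
    intro N
    rw [div_pow, one_pow]
    exact (div_le_div_iff_of_pos_right (by positivity)).mpr (hy01 N).2.le
  have htail : Filter.Tendsto (fun N => y N / (k:ℝ) ^ N) Filter.atTop (nhds 0) :=
    squeeze_zero (fun N => div_nonneg (hy01 N).1 (by positivity)) hb1
      (tendsto_pow_atTop_nhds_zero_of_lt_one (by positivity)
        (by rw [div_lt_one hk0]; exact hk1))
  have hsum : HasSum (fun n => (A n : ℝ) / (k:ℝ) ^ (n+1)) x := by
    rw [hasSum_iff_tendsto_nat_of_nonneg hnn]
    simp only [hpart]
    simpa using Filter.Tendsto.const_sub x htail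
  exact hsum.tsum_eq.symm
end
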